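/- arXiv:1811.06848 — 2 statements merged into one kernel-verified Lean document; each statement's English description precedes it below -/
import Mathlib

section
/- Let φ be an n×n real matrix whose symmetric part φ_s is positive-definite and let F be an antisymmetric n×n real matrix. Then the block matrix g = [[(φ⁻¹)_s, φ⁻¹F/2], [−F(φᵀ)⁻¹/2, φ_s]] (as a symmetric bilinear form via its symmetric part equal to itself) is positive-definite if and only if both φ_s and φ_s + (1/4) F (φ_s)⁻¹ F are positive-definite. -/
/-!
Take the Schur complement of `g` with respect to its lower-right block `φ_s`. Since
`φ⁻¹ φ_s φ⁻ᵀ = (φ⁻¹)_s` and the off-diagonal blocks are `±φ⁻¹F/2`, `∓Fφ⁻ᵀ/2`, that complement is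
`φ⁻¹ (φ_s + F φ_s⁻¹ F / 4) φ⁻ᵀ`, a congruence transform of the second matrix by the unit `φ⁻¹`.
-/

open Matrix

namespace Matrix

open scoped ComplexOrder in
theorem PosDef.posDef_fromBlocks₂₂_iff {m n 𝕜 : Type*} [Fintype m] [Fintype n] [DecidableEq m]
    [DecidableEq n] [RCLike 𝕜] (A : Matrix m m 𝕜) (B : Matrix m n 𝕜) {D : Matrix n n 𝕜}
    (hD : D.PosDef) [Invertible D] :
    (fromBlocks A B Bᴴ D).PosDef ↔ (A - B * D⁻¹ * Bᴴ).PosDef := by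
  by_cases hS : (A - B * D⁻¹ * Bᴴ).PosSemidef
  · rw [((PosDef.fromBlocks₂₂ A B hD).mpr hS).posDef_iff_det_ne_zero, hS.posDef_iff_det_ne_zero,
      det_fromBlocks₂₂, invOf_eq_nonsing_inv, mul_ne_zero_iff, and_iff_right hD.det_pos.ne']
  · exact iff_of_false (fun h ↦ hS ((PosDef.fromBlocks₂₂ A B hD).mp h.posSemidef))
      (fun h ↦ hS h.posSemidef)

theorem inv_mul_add_transpose_mul_inv_transpose {n α : Type*} [Fintype n] [DecidableEq n]
    [CommRing α] (φ : Matrix n n α) [Invertible φ] :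
    φ⁻¹ * (φ + φᵀ) * φ⁻¹ᵀ = φ⁻¹ + φ⁻¹ᵀ := by
  have hφ : IsUnit φ.det := isUnit_det_of_invertible φ
  have hφT : IsUnit φᵀ.det := by rwa [det_transpose]
  rw [transpose_nonsing_inv, Matrix.mul_add, Matrix.add_mul, nonsing_inv_mul _ hφ, Matrix.one_mul,
    mul_nonsing_inv_cancel_right _ _ hφT, add_comm]

end Matrix

/-- Positive-definiteness of the metric block matrix
`g = [[(φ⁻¹)_s, φ⁻¹F/2], [−F(φᵀ)⁻¹/2, φ_s]]` is equivalent to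
positive-definiteness of both `φ_s` and `φ_s + (1/4) F (φ_s)⁻¹ F`. -/
theorem metric_posDef_iff {n : ℕ} (φ F : Matrix (Fin n) (Fin n) ℝ)
    (hφ : Invertible φ) (hF : Fᵀ = -F)
    (hs : ((1/2 : ℝ) • (φ + φᵀ)).PosDef) :
    (fromBlocks
        ((1/2 : ℝ) • (φ⁻¹ + (φ⁻¹)ᵀ)) ((1/2 : ℝ) • (φ⁻¹ * F))
        (-((1/2 : ℝ) • (F * (φᵀ)⁻¹))) ((1/2 : ℝ) • (φ + φᵀ))).PosDef ↔
      (((1/2 : ℝ) • (φ + φᵀ)).PosDef ∧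
        (((1/2 : ℝ) • (φ + φᵀ)) +
          (1/4 : ℝ) • (F * ((1/2 : ℝ) • (φ + φᵀ))⁻¹ * F)).PosDef) := by
  set S := (1/2 : ℝ) • (φ + φᵀ)
  have : Invertible S := hs.isUnit.invertible
  have hBH : ((1/2 : ℝ) • (φ⁻¹ * F))ᴴ = -((1/2 : ℝ) • (F * (φᵀ)⁻¹)) := by
    simp [conjTranspose_eq_transpose_of_trivial, hF, transpose_nonsing_inv]
  have hA : φ⁻¹ * S * star φ⁻¹ = (1/2 : ℝ) • (φ⁻¹ + φ⁻¹ᵀ) := by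
    rw [star_eq_conjTranspose, conjTranspose_eq_transpose_of_trivial, Matrix.mul_smul,
      Matrix.smul_mul, inv_mul_add_transpose_mul_inv_transpose]
  have hSchur : (1/2 : ℝ) • (φ⁻¹ + φ⁻¹ᵀ) - (1/2 : ℝ) • (φ⁻¹ * F) * S⁻¹ * ((1/2 : ℝ) • (φ⁻¹ * F))ᴴ
      = φ⁻¹ * (S + (1/4 : ℝ) • (F * S⁻¹ * F)) * star φ⁻¹ := by
    rw [Matrix.mul_add, Matrix.add_mul, hA, hBH, star_eq_conjTranspose,
      conjTranspose_eq_transpose_of_trivial, transpose_nonsing_inv]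
    simp only [Matrix.mul_assoc, Matrix.mul_neg, Matrix.smul_mul, Matrix.mul_smul, smul_smul,
      sub_neg_eq_add]
    norm_num
  rw [← hBH, hs.posDef_fromBlocks₂₂_iff, hSchur,
    (isUnit_nonsing_inv_iff.mpr (isUnit_of_invertible φ)).posDef_star_right_conjugate_iff,
    and_iff_right hs]
end

section
/- Let φ_s be symmetric positive-definite, C antisymmetric, φ = φ_s + C, F antisymmetric, and Ξ = φ_s + (1/4)F(φ_s)⁻¹F invertible. Then the 2n×2n block matrix [[−(φᵀ)⁻¹F/2, −(φ⁻¹)_s],[φ_s + F(φᵀ)⁻¹F/2, F(φᵀ)⁻¹/2]] is invertible with inverse [[Ξ⁻¹F(φ_s)⁻¹φ/2, Ξ⁻¹],[(−φᵀ + AFΞ⁻¹F/2)(φ_s)⁻¹φ, AFΞ⁻¹]] where A = φᵀ(φ_s)⁻¹/2 − I. -/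
/-!
Since `C` is antisymmetric, `vᵀφv = vᵀφ_s v > 0` for `v ≠ 0`, so `φ` is invertible, and
`φ + φᵀ = 2φ_s`. The latter gives `(φ⁻¹)_s = φ⁻¹φ_s(φᵀ)⁻¹`, whence `(φ⁻¹)_s A = -(φᵀ)⁻¹/2` and
`(φᵀ)⁻¹A = φ_s⁻¹/2 - (φᵀ)⁻¹`. With these two identities and `φ_s Ξ⁻¹ = 1 - Fφ_s⁻¹FΞ⁻¹/4`, each of
the four blocks of the product collapses to the corresponding block of the identity; a one-sided
inverse of a square matrix is two-sided.
-/

open Matrix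

variable {m : Type*} [Fintype m]

theorem Matrix.dotProduct_mulVec_self_eq_zero_of_transpose_eq_neg {C : Matrix m m ℝ}
    (hC : Cᵀ = -C) (v : m → ℝ) : v ⬝ᵥ (C *ᵥ v) = 0 := by
  have h : v ⬝ᵥ (C *ᵥ v) = -(v ⬝ᵥ (C *ᵥ v)) := by
    conv_lhs => rw [dotProduct_mulVec, ← mulVec_transpose, hC, neg_mulVec, neg_dotProduct,
      dotProduct_comm]
  linarith

variable [DecidableEq m]

theorem Matrix.PosDef.isUnit_det_add_of_transpose_eq_neg {S C : Matrix m m ℝ} (hS : S.PosDef)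
    (hC : Cᵀ = -C) : IsUnit (S + C).det := by
  rw [isUnit_iff_ne_zero, Ne, ← exists_mulVec_eq_zero_iff]
  rintro ⟨v, hv, hSCv⟩
  have hpos : 0 < v ⬝ᵥ (S *ᵥ v) := by simpa using hS.dotProduct_mulVec_pos hv
  have hzero : v ⬝ᵥ (S *ᵥ v) = 0 := by
    simpa [add_mulVec, dotProduct_mulVec_self_eq_zero_of_transpose_eq_neg hC] using
      congrArg (v ⬝ᵥ ·) hSCv
  exact hpos.ne' hzero

section InverseIdentities

variable {S φ ψ : Matrix m m ℝ}

theorem half_smul_inv_add_inv_eq (hφ : IsUnit φ.det) (hψ : IsUnit ψ.det)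
    (hφψ : φ + ψ = (2 : ℝ) • S) : (1/2 : ℝ) • (φ⁻¹ + ψ⁻¹) = φ⁻¹ * S * ψ⁻¹ := by
  have hS : S = (1/2 : ℝ) • (φ + ψ) := by rw [hφψ, smul_smul]; norm_num
  rw [hS, Matrix.mul_smul, Matrix.smul_mul, mul_add, add_mul, nonsing_inv_mul _ hφ, one_mul,
    mul_nonsing_inv_cancel_right _ _ hψ, add_comm]

theorem inv_mul_half_smul_mul_inv_sub_one (hψ : IsUnit ψ.det) :
    ψ⁻¹ * ((1/2 : ℝ) • (ψ * S⁻¹) - 1) = (1/2 : ℝ) • S⁻¹ - ψ⁻¹ := by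
  rw [mul_sub, mul_smul_comm, nonsing_inv_mul_cancel_left _ _ hψ, mul_one]

theorem half_smul_inv_add_inv_mul_half_smul_mul_inv_sub_one (hS : IsUnit S.det)
    (hφ : IsUnit φ.det) (hψ : IsUnit ψ.det) (hφψ : φ + ψ = (2 : ℝ) • S) :
    (1/2 : ℝ) • (φ⁻¹ + ψ⁻¹) * ((1/2 : ℝ) • (ψ * S⁻¹) - 1) = -((1/2 : ℝ) • ψ⁻¹) := by
  rw [half_smul_inv_add_inv_eq hφ hψ hφψ, mul_assoc, inv_mul_half_smul_mul_inv_sub_one hψ,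
    mul_sub, mul_smul_comm, mul_nonsing_inv_cancel_right _ _ hS,
    ← half_smul_inv_add_inv_eq hφ hψ hφψ]
  module

theorem fromBlocks_mul_fromBlocks_eq_one {F : Matrix m m ℝ} (hS : IsUnit S.det)
    (hφ : IsUnit φ.det) (hψ : IsUnit ψ.det) (hφψ : φ + ψ = (2 : ℝ) • S)
    (hΞ : IsUnit (S + (1/4 : ℝ) • (F * S⁻¹ * F)).det) :
    (fromBlocks
        (-((1/2 : ℝ) • (ψ⁻¹ * F)))
        (-((1/2 : ℝ) • (φ⁻¹ + ψ⁻¹)))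
        (S + (1/2 : ℝ) • (F * ψ⁻¹ * F))
        ((1/2 : ℝ) • (F * ψ⁻¹))) *
      (fromBlocks
        ((1/2 : ℝ) • ((S + (1/4 : ℝ) • (F * S⁻¹ * F))⁻¹ * F * S⁻¹ * φ))
        ((S + (1/4 : ℝ) • (F * S⁻¹ * F))⁻¹)
        ((-ψ + (1/2 : ℝ) • (((1/2 : ℝ) • (ψ * S⁻¹) - 1) * F *
            (S + (1/4 : ℝ) • (F * S⁻¹ * F))⁻¹ * F)) * (S⁻¹ * φ))
        (((1/2 : ℝ) • (ψ * S⁻¹) - 1) * F * (S + (1/4 : ℝ) • (F * S⁻¹ * F))⁻¹)) = 1 := by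
  -- `P` and `A` stay opaque so that `simp` cannot distribute them; the rules below act on
  -- right-associated products.
  set X := (S + (1/4 : ℝ) • (F * S⁻¹ * F))⁻¹
  set A := (1/2 : ℝ) • (ψ * S⁻¹) - 1 with hA
  set P := (1/2 : ℝ) • (φ⁻¹ + ψ⁻¹) with hP
  have hPψ (Z : Matrix m m ℝ) : P * (ψ * Z) = φ⁻¹ * (S * Z) := by
    rw [hP, half_smul_inv_add_inv_eq hφ hψ hφψ, mul_assoc, mul_assoc,
      nonsing_inv_mul_cancel_left _ _ hψ]
  have hPA (Z : Matrix m m ℝ) : P * (A * Z) = -((1/2 : ℝ) • (ψ⁻¹ * Z)) := by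
    rw [← mul_assoc, hP, hA, half_smul_inv_add_inv_mul_half_smul_mul_inv_sub_one hS hφ hψ hφψ,
      neg_mul, Matrix.smul_mul]
  have hψA (Z : Matrix m m ℝ) : ψ⁻¹ * (A * Z) = (1/2 : ℝ) • (S⁻¹ * Z) - ψ⁻¹ * Z := by
    rw [← mul_assoc, hA, inv_mul_half_smul_mul_inv_sub_one hψ, sub_mul, Matrix.smul_mul]
  have hSX : S * X = 1 - (1/4 : ℝ) • (F * S⁻¹ * F * X) := by
    rw [eq_sub_iff_add_eq, ← Matrix.smul_mul, ← add_mul, mul_nonsing_inv _ hΞ]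
  have hSX' (Z : Matrix m m ℝ) : S * (X * Z) = Z - (1/4 : ℝ) • (F * (S⁻¹ * (F * (X * Z)))) := by
    rw [← mul_assoc, hSX, sub_mul, one_mul, Matrix.smul_mul]
    simp only [mul_assoc]
  rw [fromBlocks_multiply, ← fromBlocks_one]
  congr 1 <;>
  · simp only [add_mul, mul_add, mul_sub, neg_mul, mul_neg, Matrix.smul_mul, Matrix.mul_smul,
      mul_assoc, hPψ, hPA, hψA, hSX', hSX, nonsing_inv_mul_cancel_left _ _ hψ,
      mul_nonsing_inv_cancel_left _ _ hS, nonsing_inv_mul _ hφ]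
    module

end InverseIdentities

theorem block_inverse_general {n : ℕ} (φs C F : Matrix (Fin n) (Fin n) ℝ)
    (hs : φs.PosDef) (hC : Cᵀ = -C)
    (hΞ : IsUnit (φs + (1/4 : ℝ) • (F * φs⁻¹ * F)).det) :
    (fromBlocks
        (-((1/2 : ℝ) • (((φs + C)ᵀ)⁻¹ * F)))
        (-((1/2 : ℝ) • ((φs + C)⁻¹ + ((φs + C)⁻¹)ᵀ)))
        (φs + (1/2 : ℝ) • (F * ((φs + C)ᵀ)⁻¹ * F))
        ((1/2 : ℝ) • (F * ((φs + C)ᵀ)⁻¹))) *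
      (fromBlocks
        ((1/2 : ℝ) • ((φs + (1/4 : ℝ) • (F * φs⁻¹ * F))⁻¹ * F * φs⁻¹ * (φs + C)))
        ((φs + (1/4 : ℝ) • (F * φs⁻¹ * F))⁻¹)
        ((-(φs + C)ᵀ + (1/2 : ℝ) • (((1/2 : ℝ) • ((φs + C)ᵀ * φs⁻¹) - 1) * F *
            (φs + (1/4 : ℝ) • (F * φs⁻¹ * F))⁻¹ * F)) * (φs⁻¹ * (φs + C)))
        (((1/2 : ℝ) • ((φs + C)ᵀ * φs⁻¹) - 1) * F *
          (φs + (1/4 : ℝ) • (F * φs⁻¹ * F))⁻¹)) = 1 ∧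
    (fromBlocks
        ((1/2 : ℝ) • ((φs + (1/4 : ℝ) • (F * φs⁻¹ * F))⁻¹ * F * φs⁻¹ * (φs + C)))
        ((φs + (1/4 : ℝ) • (F * φs⁻¹ * F))⁻¹)
        ((-(φs + C)ᵀ + (1/2 : ℝ) • (((1/2 : ℝ) • ((φs + C)ᵀ * φs⁻¹) - 1) * F *
            (φs + (1/4 : ℝ) • (F * φs⁻¹ * F))⁻¹ * F)) * (φs⁻¹ * (φs + C)))
        (((1/2 : ℝ) • ((φs + C)ᵀ * φs⁻¹) - 1) * F *
          (φs + (1/4 : ℝ) • (F * φs⁻¹ * F))⁻¹)) *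
      (fromBlocks
        (-((1/2 : ℝ) • (((φs + C)ᵀ)⁻¹ * F)))
        (-((1/2 : ℝ) • ((φs + C)⁻¹ + ((φs + C)⁻¹)ᵀ)))
        (φs + (1/2 : ℝ) • (F * ((φs + C)ᵀ)⁻¹ * F))
        ((1/2 : ℝ) • (F * ((φs + C)ᵀ)⁻¹))) = 1 := by
  have hφ : IsUnit (φs + C).det := hs.isUnit_det_add_of_transpose_eq_neg hC
  have hψ : IsUnit (φs + C)ᵀ.det := by rwa [det_transpose]
  have hφψ : (φs + C) + (φs + C)ᵀ = (2 : ℝ) • φs := by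
    rw [transpose_add, (isHermitian_iff_isSymm.mp hs.isHermitian).eq, hC, two_smul]
    abel
  have h := fromBlocks_mul_fromBlocks_eq_one (F := F) hs.det_pos.ne'.isUnit hφ hψ hφψ hΞ
  rw [transpose_nonsing_inv]
  exact ⟨h, mul_eq_one_comm.mp h⟩

/-- The block matrix `(J₊+J₋)/2 = [[−(φᵀ)⁻¹F/2, −(φ⁻¹)_s],[φ_s + F(φᵀ)⁻¹F/2, F(φᵀ)⁻¹/2]]`
is invertible with inverse
`[[Ξ⁻¹F(φ_s)⁻¹φ/2, Ξ⁻¹],[(−φᵀ + AFΞ⁻¹F/2)(φ_s)⁻¹φ, AFΞ⁻¹]]`,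
where `φ = φ_s + C`, `Ξ = φ_s + (1/4)F(φ_s)⁻¹F`, `A = φᵀ(φ_s)⁻¹/2 − I`. -/
theorem block_inverse {n : ℕ} (φs C F : Matrix (Fin n) (Fin n) ℝ)
    (hs : φs.PosDef) (hC : Cᵀ = -C) (hF : Fᵀ = -F)
    (hΞ : IsUnit (φs + (1/4 : ℝ) • (F * φs⁻¹ * F)).det) :
    (fromBlocks
        (-((1/2 : ℝ) • (((φs + C)ᵀ)⁻¹ * F)))
        (-((1/2 : ℝ) • ((φs + C)⁻¹ + ((φs + C)⁻¹)ᵀ)))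
        (φs + (1/2 : ℝ) • (F * ((φs + C)ᵀ)⁻¹ * F))
        ((1/2 : ℝ) • (F * ((φs + C)ᵀ)⁻¹))) *
      (fromBlocks
        ((1/2 : ℝ) • ((φs + (1/4 : ℝ) • (F * φs⁻¹ * F))⁻¹ * F * φs⁻¹ * (φs + C)))
        ((φs + (1/4 : ℝ) • (F * φs⁻¹ * F))⁻¹)
        ((-(φs + C)ᵀ + (1/2 : ℝ) • (((1/2 : ℝ) • ((φs + C)ᵀ * φs⁻¹) - 1) * F *
            (φs + (1/4 : ℝ) • (F * φs⁻¹ * F))⁻¹ * F)) * (φs⁻¹ * (φs + C)))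
        (((1/2 : ℝ) • ((φs + C)ᵀ * φs⁻¹) - 1) * F *
          (φs + (1/4 : ℝ) • (F * φs⁻¹ * F))⁻¹)) = 1 ∧
    (fromBlocks
        ((1/2 : ℝ) • ((φs + (1/4 : ℝ) • (F * φs⁻¹ * F))⁻¹ * F * φs⁻¹ * (φs + C)))
        ((φs + (1/4 : ℝ) • (F * φs⁻¹ * F))⁻¹)
        ((-(φs + C)ᵀ + (1/2 : ℝ) • (((1/2 : ℝ) • ((φs + C)ᵀ * φs⁻¹) - 1) * F *
            (φs + (1/4 : ℝ) • (F * φs⁻¹ * F))⁻¹ * F)) * (φs⁻¹ * (φs + C)))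
        (((1/2 : ℝ) • ((φs + C)ᵀ * φs⁻¹) - 1) * F *
          (φs + (1/4 : ℝ) • (F * φs⁻¹ * F))⁻¹)) *
      (fromBlocks
        (-((1/2 : ℝ) • (((φs + C)ᵀ)⁻¹ * F)))
        (-((1/2 : ℝ) • ((φs + C)⁻¹ + ((φs + C)⁻¹)ᵀ)))
        (φs + (1/2 : ℝ) • (F * ((φs + C)ᵀ)⁻¹ * F))
        ((1/2 : ℝ) • (F * ((φs + C)ᵀ)⁻¹))) = 1 :=
  block_inverse_general φs C F hs hC hΞ
end
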